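/- If M ≺ H_θ is a δ-guessing model which is not an ℵ₀-guessing model, then 2^{<δ} ≥ κ_M. -/

import Mathlib

open Cardinal

namespace GuessingModels

/-- First-order formulas in the language of set theory (membership and equality),
with `n` free variables. -/
inductive SF : ℕ → Type
  | mem {n} (i j : Fin n) : SF n
  | eq {n} (i j : Fin n) : SF n
  | imp {n} (f g : SF n) : SF n
  | not {n} (f : SF n) : SF n
  | ex {n} (f : SF (n + 1)) : SF n

/-- Tarskian satisfaction of a set-theoretic formula in the structure `⟨S, ∈⟩`,
where `S` is a class of ZF sets. -/
def Realize (S : Set ZFSet) : ∀ {n}, SF n → (Fin n → ZFSet) → Prop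
  | _, .mem i j, v => v i ∈ v j
  | _, .eq i j, v => v i = v j
  | _, .imp f g, v => Realize S f v → Realize S g v
  | _, .not f, v => ¬ Realize S f v
  | _, .ex f, v => ∃ x ∈ S, Realize S f (Fin.cons x v)

/-- `M ≺ R` : `M` is an elementary substructure of `⟨R, ∈⟩`. -/
def Prec (M R : Set ZFSet) : Prop :=
  M ⊆ R ∧ ∀ {n : ℕ} (φ : SF n) (v : Fin n → ZFSet), (∀ i, v i ∈ M) →
    (Realize M φ v ↔ Realize R φ v)

/-- A (von Neumann) ordinal: a transitive set of transitive sets. -/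
def IsOrd (x : ZFSet) : Prop :=
  x.IsTransitive ∧ ∀ y ∈ x, ZFSet.IsTransitive y

/-- `≤` on ordinals, i.e. `∈` or `=`. -/
def ole (a b : ZFSet) : Prop := a ∈ b ∨ a = b

/-- The cardinality of (the extension of) a ZF set. -/
noncomputable def card (x : ZFSet) : Cardinal := Cardinal.mk x.toSet

/-- A ZF set which is a cardinal: an ordinal not equinumerous with any of its members. -/
def IsCard (κ : ZFSet) : Prop := IsOrd κ ∧ ∀ β ∈ κ, card β < card κ

/-- `s` (an external class) is a cofinal subset of the ordinal `κ`. -/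
def CofinalSetIn (s : Set ZFSet) (κ : ZFSet) : Prop :=
  (∀ x ∈ s, x ∈ κ) ∧ ∀ β ∈ κ, ∃ γ ∈ s, ole β γ

/-- A regular cardinal: an infinite cardinal all of whose cofinal subsets have full size. -/
def IsRegCard (κ : ZFSet) : Prop :=
  IsCard κ ∧ ZFSet.omega ⊆ κ ∧
    ∀ s : Set ZFSet, CofinalSetIn s κ → Cardinal.mk s = card κ

/-- A strong limit ZF cardinal. -/
def IsStrongLimit (κ : ZFSet) : Prop := ∀ β ∈ κ, (2 : Cardinal) ^ card β < card κ

/-- A strongly inaccessible cardinal: regular, uncountable and strong limit. -/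
def IsInacc (κ : ZFSet) : Prop := IsRegCard κ ∧ ZFSet.omega ∈ κ ∧ IsStrongLimit κ

/-- The transitive closure of a ZF set, as a class. -/
def tcl (x : ZFSet) : Set ZFSet := {y | Relation.TransGen (· ∈ ·) y x}

/-- `H_θ` : the class of sets hereditarily of size `< θ`. -/
noncomputable def HSet (θ : ZFSet) : Set ZFSet := {x | Cardinal.mk (tcl x) < card θ}

/-- `V_α` as a class, for `α` an ordinal (as a ZF set): sets of rank `< α`. -/
noncomputable def VSet (α : ZFSet) : Set ZFSet := {x | x.rank < α.rank}

/-- A suitable initial segment: `H_θ` for a regular cardinal `θ`, or a rank initial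
segment `V_α`. -/
def Suitable (R : Set ZFSet) : Prop :=
  (∃ θ : ZFSet, IsRegCard θ ∧ R = HSet θ) ∨ (∃ α : ZFSet, IsOrd α ∧ R = VSet α)

/-- `κ = κ_M` : `κ` is the least ordinal in `M` with `M ∩ κ ≠ κ`. -/
def KappaSpec (M : Set ZFSet) (κ : ZFSet) : Prop :=
  IsOrd κ ∧ κ ∈ M ∧ (∃ β ∈ κ, β ∉ M) ∧
    ∀ α : ZFSet, IsOrd α → α ∈ M → (∃ β ∈ α, β ∉ M) → ole κ α

/-- `d` is `(δ, M)`-approximated: `d ∩ Z ∈ M` for every `Z ∈ M` of size `< δ`. -/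
noncomputable def Approx (M : Set ZFSet) (δ : Cardinal.{1}) (d : ZFSet) : Prop :=
  ∀ Z : ZFSet, Z ∈ M → card Z < δ → (d ∩ Z) ∈ M

/-- `d ⊆ X` is `M`-guessed: `d ∩ M = e ∩ M` for some `e ∈ M ∩ P(X)`. -/
def Guessed (M : Set ZFSet) (X d : ZFSet) : Prop :=
  ∃ e : ZFSet, e ∈ M ∧ e ⊆ X ∧ ∀ z ∈ M, (z ∈ e ↔ z ∈ d)

/-- `M` is a `δ`-guessing model: every `(δ,M)`-approximated subset of any `X ∈ M`
is `M`-guessed. -/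
noncomputable def GuessingModel (M : Set ZFSet) (δ : Cardinal.{1}) : Prop :=
  ∀ X ∈ M, ∀ d : ZFSet, d ⊆ X → Approx M δ d → Guessed M X d

/-- `M` is `ℵ₁`-internally unbounded: every countable subset of `M` is contained
in a countable element of `M`. -/
noncomputable def IntUnb (M : Set ZFSet) : Prop :=
  ∀ A : Set ZFSet, A ⊆ M → A.Countable → ∃ z ∈ M, card z ≤ ℵ₀ ∧ A ⊆ z.toSet


/-!
Suppose `2^{<δ} < κ_M`. For `Z ∈ M` with `|Z| < δ`, the power set `𝒫 Z` is in `M` and has size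
`< κ_M`, so by elementarity `M` contains an injection of `𝒫 Z` into some ordinal `α < κ_M`. Since
`α ⊆ M`, every `y ⊆ Z` is the unique preimage of some `b ∈ M`, hence `y ∈ M`. Thus every subset
of a set in `M` is `(δ, M)`-approximated, and `δ`-guessing yields `ℵ₀`-guessing.
-/

universe u

lemma card_eq_lift (x : ZFSet.{u}) : card x = lift.{u + 1} (ZFSet.card x) :=
  ZFSet.cardinalMk_coe_sort

lemma card_powerset (Z : ZFSet) : card Z.powerset = 2 ^ card Z := by
  rw [card_eq_lift, card_eq_lift, ZFSet.card_powerset, lift_two_power]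

lemma IsOrd.isOrdinal {x : ZFSet} (hx : IsOrd x) : x.IsOrdinal :=
  ZFSet.isOrdinal_iff_forall_mem_isTransitive.2 hx

lemma exists_mem_le_card {κ : ZFSet.{u}} (hκ : IsOrd κ) {c : Cardinal.{u + 1}}
    (hc : c < card κ) : ∃ β ∈ κ, c ≤ card β := by
  rw [card_eq_lift, ← hκ.isOrdinal.toZFSet_rank_eq, Ordinal.card_toZFSet] at hc
  obtain ⟨c, rfl⟩ := Cardinal.mem_range_lift_of_le hc.le
  refine ⟨c.ord.toZFSet, ?_, ?_⟩
  · rw [← hκ.isOrdinal.toZFSet_rank_eq, Ordinal.toZFSet_mem_toZFSet_iff]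
    exact lt_of_not_ge fun h => (lift_lt.1 hc).not_ge (by simpa using Ordinal.card_le_card h)
  · rw [card_eq_lift, Ordinal.card_toZFSet, Cardinal.card_ord]

lemma aleph0_le_card {θ : ZFSet} (hθ : ZFSet.omega ⊆ θ) : ℵ₀ ≤ card θ := by
  have hnat : ∀ n : ℕ, (n : Ordinal).toZFSet ∈ ZFSet.omega := by
    intro n
    induction n with
    | zero => simp [ZFSet.omega_zero]
    | succ n ih => simpa [Ordinal.toZFSet_add_one] using ZFSet.omega_succ ih
  rw [card, Cardinal.aleph0_le_mk_iff]
  exact Infinite.of_injective (fun n => (⟨_, hθ (hnat n)⟩ : θ.toSet)) fun m n h =>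
    Nat.cast_injective (Ordinal.toZFSet_injective (congrArg Subtype.val h))

lemma tcl_subset_of {x : ZFSet} {T : Set ZFSet} (hx : x.toSet ⊆ T)
    (hT : ∀ a ∈ T, a.toSet ⊆ T) : tcl x ⊆ T := by
  intro y hy
  induction hy using Relation.TransGen.head_induction_on with
  | single h => exact hx h
  | head h _ ih => exact hT _ ih h

lemma tcl_subset_tcl_of_mem {x y : ZFSet} (h : y ∈ x) : tcl y ⊆ tcl x :=
  fun _ hz => hz.tail h

lemma tcl_subset_tcl_of_subset {x y : ZFSet} (h : y ⊆ x) : tcl y ⊆ tcl x :=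
  tcl_subset_of (fun _ hz => .single (h hz)) fun _ ha _ hz => .head hz ha

lemma tcl_subset_union (x : ZFSet) : tcl x ⊆ x.toSet ∪ ⋃ y ∈ x.toSet, tcl y := by
  intro z hz
  cases hz with
  | single h => exact Or.inl h
  | tail h hy => exact Or.inr (Set.mem_biUnion hy h)

lemma mk_tcl_le {x : ZFSet} {μ : Cardinal} (h : ∀ y ∈ x, #(tcl y) ≤ μ) :
    #(tcl x) ≤ #x.toSet + #x.toSet * μ :=
  calc #(tcl x) ≤ #x.toSet + #x.toSet * ⨆ y : x.toSet, #(tcl y.1) :=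
        (mk_le_mk_of_subset (tcl_subset_union x)).trans
          ((mk_union_le _ _).trans (by gcongr; exact mk_biUnion_le _ _))
    _ ≤ #x.toSet + #x.toSet * μ := by gcongr; exact ciSup_le' fun y => h y.1 y.2

lemma mk_tcl_pair_le {b c : ZFSet} {μ : Cardinal} (hb : #(tcl b) ≤ μ) (hc : #(tcl c) ≤ μ) :
    #(tcl {b, c}) ≤ 2 + 2 * μ := by
  have h2 : #({b, c} : ZFSet).toSet ≤ 2 :=
    (mk_le_mk_of_subset (t := {b, c}) fun _ hy => ZFSet.mem_pair.1 hy).trans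
      (mk_insert_le.trans (by rw [mk_singleton, one_add_one_eq_two]))
  refine (mk_tcl_le fun y hy => ?_).trans (by gcongr)
  rcases ZFSet.mem_pair.1 hy with rfl | rfl
  exacts [hb, hc]

lemma mk_tcl_kpair_le {b c : ZFSet} {μ : Cardinal} (hb : #(tcl b) ≤ μ) (hc : #(tcl c) ≤ μ) :
    #(tcl (ZFSet.pair b c)) ≤ 2 + 2 * (2 + 2 * μ) := by
  rw [ZFSet.pair, ← ZFSet.pair_eq_singleton]
  exact mk_tcl_pair_le (mk_tcl_pair_le hb hb) (mk_tcl_pair_le hb hc)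

lemma two_add_two_mul_lt {μ c : Cardinal} (hc : ℵ₀ ≤ c) (hμ : μ < c) : 2 + 2 * μ < c :=
  have h2 : (2 : Cardinal) < c := ofNat_lt_aleph0.trans_le hc
  add_lt_of_lt hc h2 (mul_lt_of_lt hc h2 hμ)

noncomputable def graph {P β : ZFSet.{u}} (g : P → β) : ZFSet.{u} :=
  ZFSet.range fun y : P => ZFSet.pair y.1 (g y).1

lemma pair_mem_graph {P β : ZFSet} (g : P → β) (y : P) : ZFSet.pair y.1 (g y).1 ∈ graph g :=
  ZFSet.mem_range_self y

lemma eq_of_pair_mem_graph {P β : ZFSet} {g : P → β} (hg : Function.Injective g)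
    {y y' b : ZFSet} (h : ZFSet.pair y b ∈ graph g) (h' : ZFSet.pair y' b ∈ graph g) :
    y = y' := by
  obtain ⟨z, hz⟩ := ZFSet.mem_range.1 h
  obtain ⟨z', hz'⟩ := ZFSet.mem_range.1 h'
  rw [ZFSet.pair_inj] at hz hz'
  rw [← hz.1, ← hz'.1, hg (Subtype.ext (hz.2.trans hz'.2.symm))]

section HSet

variable {θ : ZFSet}

lemma mem_hset_of_mem {x y : ZFSet} (hx : x ∈ HSet θ) (hy : y ∈ x) : y ∈ HSet θ :=
  (mk_le_mk_of_subset (tcl_subset_tcl_of_mem hy)).trans_lt hx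

lemma mem_hset_of_subset {x y : ZFSet} (hx : x ∈ HSet θ) (hy : y ⊆ x) : y ∈ HSet θ :=
  (mk_le_mk_of_subset (tcl_subset_tcl_of_subset hy)).trans_lt hx

lemma card_lt_of_mem_hset {x : ZFSet} (hx : x ∈ HSet θ) : card x < card θ :=
  (mk_le_mk_of_subset fun _ hy => .single hy).trans_lt hx

lemma mem_hset_of_forall_mem_le (hθ : ℵ₀ ≤ card θ) {x : ZFSet} {μ : Cardinal}
    (hx : card x < card θ) (hμ : μ < card θ) (h : ∀ y ∈ x, #(tcl y) ≤ μ) : x ∈ HSet θ :=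
  (mk_tcl_le h).trans_lt (add_lt_of_lt hθ hx (mul_lt_of_lt hθ hx hμ))

lemma pair_mem_hset (hθ : ℵ₀ ≤ card θ) {b c : ZFSet} (hb : b ∈ HSet θ) (hc : c ∈ HSet θ) :
    ({b, c} : ZFSet) ∈ HSet θ :=
  (mk_tcl_pair_le (le_max_left _ _) (le_max_right _ _)).trans_lt
    (two_add_two_mul_lt hθ (max_lt hb hc))

lemma powerset_mem_hset (hθ : ℵ₀ ≤ card θ) {Z : ZFSet} (hZ : Z ∈ HSet θ)
    (hpow : 2 ^ card Z < card θ) : Z.powerset ∈ HSet θ :=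
  mem_hset_of_forall_mem_le hθ (card_powerset Z ▸ hpow) hZ fun _ hy =>
    mk_le_mk_of_subset (tcl_subset_tcl_of_subset (ZFSet.mem_powerset.1 hy))

lemma graph_mem_hset (hθ : ℵ₀ ≤ card θ) {P β : ZFSet} (hP : P ∈ HSet θ) (hβ : β ∈ HSet θ)
    (g : P → β) : graph g ∈ HSet θ := by
  set ν := max #(tcl P) #(tcl β)
  refine mem_hset_of_forall_mem_le hθ (μ := 2 + 2 * (2 + 2 * ν)) ?_
    (two_add_two_mul_lt hθ (two_add_two_mul_lt hθ (max_lt hP hβ))) ?_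
  · exact ((mk_le_mk_of_subset (t := Set.range _) fun _ hu => ZFSet.mem_range.1 hu).trans
      mk_range_le).trans_lt (card_lt_of_mem_hset hP)
  · intro u hu
    obtain ⟨y, rfl⟩ := ZFSet.mem_range.1 hu
    exact mk_tcl_kpair_le
      ((mk_le_mk_of_subset (tcl_subset_tcl_of_mem y.2)).trans (le_max_left _ _))
      ((mk_le_mk_of_subset (tcl_subset_tcl_of_mem (g y).2)).trans (le_max_right _ _))

end HSet

/- Variables are de Bruijn indices: under a binder, `0` is the bound variable and `i.succ` is the
variable `i` of the enclosing formula. -/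
namespace SF

variable {n : ℕ}

def and (f g : SF n) : SF n := .not (.imp f (.not g))

def or (f g : SF n) : SF n := .imp (.not f) g

def iff (f g : SF n) : SF n := and (.imp f g) (.imp g f)

def all (f : SF (n + 1)) : SF n := .not (.ex (.not f))

def subset (a b : Fin n) : SF n := all (.imp (.mem 0 a.succ) (.mem 0 b.succ))

def isPowerset (p z : Fin n) : SF n := all (iff (.mem 0 p.succ) (subset 0 z.succ))

def isPair (t b c : Fin n) : SF n :=
  all (iff (.mem 0 t.succ) (or (.eq 0 b.succ) (.eq 0 c.succ)))

def isKPair (u b c : Fin n) : SF n :=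
  all (iff (.mem 0 u.succ) (or (isPair 0 b.succ b.succ) (isPair 0 b.succ c.succ)))

def kpairMem (b c g : Fin n) : SF n := .ex (and (.mem 0 g.succ) (isKPair 0 b.succ c.succ))

def injRel (g : Fin n) : SF n :=
  all (all (all (.imp (and (kpairMem (Fin.succ 1) 0 g.succ.succ.succ)
    (kpairMem 1 0 g.succ.succ.succ)) (.eq (Fin.succ 1) 1))))

def covers (w a g : Fin n) : SF n :=
  all (.imp (.mem 0 w.succ) (.ex (and (.mem 0 a.succ.succ) (kpairMem 1 0 g.succ.succ))))

end SF

section Semantics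

variable {S : Set ZFSet} {n : ℕ} {v : Fin n → ZFSet}

@[simp] lemma realize_mem {i j : Fin n} : Realize S (.mem i j) v ↔ v i ∈ v j := Iff.rfl

@[simp] lemma realize_eq {i j : Fin n} : Realize S (.eq i j) v ↔ v i = v j := Iff.rfl

@[simp] lemma realize_imp {f g : SF n} :
    Realize S (.imp f g) v ↔ (Realize S f v → Realize S g v) := Iff.rfl

@[simp] lemma realize_not {f : SF n} : Realize S (.not f) v ↔ ¬ Realize S f v := Iff.rfl

@[simp] lemma realize_ex {f : SF (n + 1)} :
    Realize S (.ex f) v ↔ ∃ x ∈ S, Realize S f (Fin.cons x v) := Iff.rfl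

@[simp] lemma realize_and {f g : SF n} :
    Realize S (f.and g) v ↔ Realize S f v ∧ Realize S g v := by
  simp only [SF.and, realize_not, realize_imp]; tauto

@[simp] lemma realize_or {f g : SF n} :
    Realize S (f.or g) v ↔ Realize S f v ∨ Realize S g v := by
  simp only [SF.or, realize_not, realize_imp]; tauto

@[simp] lemma realize_iff {f g : SF n} :
    Realize S (f.iff g) v ↔ (Realize S f v ↔ Realize S g v) := by
  simp only [SF.iff, realize_and, realize_imp]; exact iff_iff_implies_and_implies.symm

@[simp] lemma realize_all {f : SF (n + 1)} :
    Realize S (SF.all f) v ↔ ∀ x ∈ S, Realize S f (Fin.cons x v) := by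
  simp only [SF.all, realize_not, realize_ex, not_exists, not_and, not_not]

def IsTransitiveClass (S : Set ZFSet) : Prop := ∀ x ∈ S, x.toSet ⊆ S

structure PairClosedTransitive (S : Set ZFSet) : Prop where
  isTransitiveClass : IsTransitiveClass S
  pair_mem : ∀ x ∈ S, ∀ y ∈ S, ({x, y} : ZFSet) ∈ S

lemma PairClosedTransitive.kpair_mem (hS : PairClosedTransitive S) {x y : ZFSet} (hx : x ∈ S)
    (hy : y ∈ S) : ZFSet.pair x y ∈ S :=
  hS.pair_mem _ (ZFSet.pair_eq_singleton x ▸ hS.pair_mem x hx x hx) _ (hS.pair_mem x hx y hy)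

lemma IsTransitiveClass.eq_iff (hS : IsTransitiveClass S) {t u : ZFSet} (ht : t ∈ S)
    (hu : u.toSet ⊆ S) : t = u ↔ ∀ x ∈ S, (x ∈ t ↔ x ∈ u) :=
  ⟨fun h _ _ => h ▸ Iff.rfl, fun h => ZFSet.ext fun x =>
    ⟨fun hx => (h x (hS t ht hx)).1 hx, fun hx => (h x (hu hx)).2 hx⟩⟩

lemma realize_subset (hS : IsTransitiveClass S) {a b : Fin n} (ha : v a ∈ S) :
    Realize S (SF.subset a b) v ↔ v a ⊆ v b := by
  simp only [SF.subset, realize_all, realize_imp, realize_mem, Fin.cons_succ, Fin.cons_zero]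
  exact ⟨fun h z hz => h z (hS _ ha hz) hz, fun h _ _ hx => h hx⟩

lemma realize_isPowerset (hS : IsTransitiveClass S) {p z : Fin n} (hp : v p ∈ S)
    (hz : ∀ y ⊆ v z, y ∈ S) :
    Realize S (SF.isPowerset p z) v ↔ v p = (v z).powerset := by
  rw [hS.eq_iff hp fun y hy => hz y (ZFSet.mem_powerset.1 hy)]
  simp +contextual [SF.isPowerset, realize_subset hS]

lemma realize_isPair (hS : IsTransitiveClass S) {t b c : Fin n} (ht : v t ∈ S) (hb : v b ∈ S)
    (hc : v c ∈ S) :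
    Realize S (SF.isPair t b c) v ↔ v t = {v b, v c} := by
  rw [hS.eq_iff ht fun y hy => by rcases ZFSet.mem_pair.1 hy with rfl | rfl <;> assumption]
  simp [SF.isPair]

lemma realize_isKPair (hS : PairClosedTransitive S) {u b c : Fin n} (hu : v u ∈ S)
    (hb : v b ∈ S) (hc : v c ∈ S) :
    Realize S (SF.isKPair u b c) v ↔ v u = ZFSet.pair (v b) (v c) := by
  rw [hS.isTransitiveClass.eq_iff hu (hS.isTransitiveClass _ (hS.kpair_mem hb hc))]
  simp +contextual [SF.isKPair, realize_isPair hS.isTransitiveClass, hb, hc, ZFSet.pair]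

lemma realize_kpairMem (hS : PairClosedTransitive S) {b c g : Fin n} (hb : v b ∈ S)
    (hc : v c ∈ S) :
    Realize S (SF.kpairMem b c g) v ↔ ZFSet.pair (v b) (v c) ∈ v g := by
  have hkpair : ∀ x ∈ S,
      Realize S (SF.isKPair 0 b.succ c.succ) (Fin.cons x v) ↔ x = ZFSet.pair (v b) (v c) :=
    fun x hx => realize_isKPair hS (u := 0) (b := b.succ) (c := c.succ) hx hb hc
  simp only [SF.kpairMem, realize_ex, realize_and, realize_mem, Fin.cons_zero, Fin.cons_succ]
  exact ⟨fun ⟨x, hx, hxg, h⟩ => (hkpair x hx).1 h ▸ hxg,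
    fun h => ⟨_, hS.kpair_mem hb hc, h, (hkpair _ (hS.kpair_mem hb hc)).2 rfl⟩⟩

def InjectiveRel (S : Set ZFSet) (f : ZFSet) : Prop :=
  ∀ y ∈ S, ∀ y' ∈ S, ∀ b ∈ S, ZFSet.pair y b ∈ f → ZFSet.pair y' b ∈ f → y = y'

lemma realize_injRel (hS : PairClosedTransitive S) {g : Fin n} :
    Realize S (SF.injRel g) v ↔ InjectiveRel S (v g) := by
  simp only [SF.injRel, realize_all, realize_imp, realize_and, realize_eq]
  refine forall₂_congr fun y hy => forall₂_congr fun y' hy' => forall₂_congr fun b hb => ?_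
  simp (disch := simpa only [Fin.cons_succ, Fin.cons_zero, Fin.cons_one]) only
    [realize_kpairMem hS, and_imp, Fin.cons_succ, Fin.cons_zero, Fin.cons_one]

lemma realize_covers (hS : PairClosedTransitive S) {w a g : Fin n} (hw : v w ∈ S)
    (ha : v a ∈ S) :
    Realize S (SF.covers w a g) v ↔ ∀ y ∈ v w, ∃ b ∈ v a, ZFSet.pair y b ∈ v g := by
  have hkpair : ∀ y ∈ S, ∀ b ∈ S, Realize S (SF.kpairMem 1 0 g.succ.succ)
      (Fin.cons b (Fin.cons y v)) ↔ ZFSet.pair y b ∈ v g :=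
    fun y hy b hb => realize_kpairMem hS (v := Fin.cons b (Fin.cons y v)) (b := 1) hy hb
  simp only [SF.covers, realize_all, realize_imp, realize_ex, realize_and, realize_mem,
    Fin.cons_succ, Fin.cons_zero]
  refine ⟨fun h y hy => ?_, fun h y hyS hy => ?_⟩
  · have hyS := hS.isTransitiveClass _ hw hy
    obtain ⟨b, hbS, hb, hyb⟩ := h y hyS hy
    exact ⟨b, hb, (hkpair y hyS b hbS).1 hyb⟩
  · obtain ⟨b, hb, hyb⟩ := h y hy
    have hbS := hS.isTransitiveClass _ ha hb
    exact ⟨b, hbS, hb, (hkpair y hyS b hbS).2 hyb⟩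

end Semantics

lemma pairClosedTransitive_hset {θ : ZFSet} (hθ : ℵ₀ ≤ card θ) :
    PairClosedTransitive (HSet θ) :=
  ⟨fun _ hx _ hy => mem_hset_of_mem hx hy, fun _ hx _ hy => pair_mem_hset hθ hx hy⟩

lemma Prec.exists_mem_of_realize_ex {M R : Set ZFSet} (hM : Prec M R) {n : ℕ}
    {φ : SF (n + 1)} {v : Fin n → ZFSet} (hv : ∀ i, v i ∈ M) (h : Realize R (.ex φ) v) :
    ∃ x ∈ M, Realize R φ (Fin.cons x v) := by
  obtain ⟨x, hx, hφ⟩ := (hM.2 _ v hv).2 h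
  exact ⟨x, hx, (hM.2 φ _ (Fin.cases hx hv)).1 hφ⟩

lemma KappaSpec.subset_of_mem {M : Set ZFSet} {κ α : ZFSet} (hκ : KappaSpec M κ)
    (hα : α ∈ M) (hακ : α ∈ κ) : α.toSet ⊆ M := by
  intro x hx
  by_contra hxM
  have hαord : IsOrd α :=
    ZFSet.isOrdinal_iff_forall_mem_isTransitive.1 (hκ.1.isOrdinal.mem hακ)
  rcases hκ.2.2.2 α hαord hα ⟨x, hx, hxM⟩ with h | rfl
  · exact ZFSet.mem_asymm hακ h
  · exact ZFSet.mem_irrefl _ hακ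

section Elementarity

variable {θ : ZFSet} {M : Set ZFSet}

lemma powerset_mem (hθ : ℵ₀ ≤ card θ) (hM : Prec M (HSet θ)) {Z : ZFSet} (hZ : Z ∈ M)
    (hpow : 2 ^ card Z < card θ) : Z.powerset ∈ M := by
  have hS := (pairClosedTransitive_hset hθ).isTransitiveClass
  have hsub : ∀ y ⊆ Z, y ∈ HSet θ := fun y hy => mem_hset_of_subset (hM.1 hZ) hy
  have hP := powerset_mem_hset hθ (hM.1 hZ) hpow
  have hdef : ∀ p ∈ HSet θ,
      Realize (HSet θ) (SF.isPowerset 0 1) (Fin.cons p ![Z]) ↔ p = Z.powerset :=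
    fun p hp => realize_isPowerset hS (p := 0) (z := 1) hp hsub
  obtain ⟨p, hpM, hp⟩ := hM.exists_mem_of_realize_ex (v := ![Z]) (by simpa using hZ)
    (realize_ex.2 ⟨_, hP, (hdef _ hP).2 rfl⟩)
  rwa [(hdef p (hM.1 hpM)).1 hp] at hpM

lemma exists_injection_mem (hθ : ℵ₀ ≤ card θ) (hM : Prec M (HSet θ)) {κ : ZFSet}
    (hκ : KappaSpec M κ) {P : ZFSet} (hP : P ∈ M) (hcard : card P < card κ) :
    ∃ α ∈ M, ∃ f ∈ M, α ∈ κ ∧ InjectiveRel (HSet θ) f ∧ ∀ y ∈ P, ∃ b ∈ α, ZFSet.pair y b ∈ f := by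
  have hS := pairClosedTransitive_hset hθ
  have hκS : κ ∈ HSet θ := hM.1 hκ.2.1
  have hdef : ∀ α ∈ HSet θ, ∀ f ∈ HSet θ,
      Realize (HSet θ) (.and (.mem 1 2) (.and (.injRel 0) (.covers 3 1 0))) ![f, α, κ, P] ↔
        α ∈ κ ∧ InjectiveRel (HSet θ) f ∧ ∀ y ∈ P, ∃ b ∈ α, ZFSet.pair y b ∈ f :=
    fun α hα f hf => by
      rw [realize_and, realize_and, realize_injRel hS, realize_covers hS (hM.1 hP) hα]; rfl
  obtain ⟨β, hβκ, hβ⟩ := exists_mem_le_card hκ.1 hcard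
  obtain ⟨g⟩ := (Cardinal.le_def _ _).1 hβ
  have hβS := mem_hset_of_mem hκS hβκ
  have hgS := graph_mem_hset hθ (hM.1 hP) hβS g
  have hβg := (hdef β hβS _ hgS).2 ⟨hβκ, ?_, ?_⟩
  · obtain ⟨α, hαM, h⟩ := hM.exists_mem_of_realize_ex (v := ![κ, P])
      (by simp [Fin.forall_fin_two, hκ.2.1, hP])
      (realize_ex.2 ⟨β, hβS, realize_ex.2 ⟨_, hgS, hβg⟩⟩)
    obtain ⟨f, hfM, h⟩ := hM.exists_mem_of_realize_ex
      (by simp [Fin.forall_fin_succ, hαM, hκ.2.1, hP]) h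
    exact ⟨α, hαM, f, hfM, (hdef α (hM.1 hαM) f (hM.1 hfM)).1 h⟩
  · exact fun y _ y' _ b _ => eq_of_pair_mem_graph g.injective
  · exact fun y hy => ⟨_, (g ⟨y, hy⟩).2, pair_mem_graph g ⟨y, hy⟩⟩

lemma subset_of_card_lt (hθ : ℵ₀ ≤ card θ) (hM : Prec M (HSet θ)) {κ : ZFSet}
    (hκ : KappaSpec M κ) {P : ZFSet} (hP : P ∈ M) (hcard : card P < card κ) : P.toSet ⊆ M := by
  have hS := pairClosedTransitive_hset hθ
  obtain ⟨α, hαM, f, hfM, hακ, hinj, hcov⟩ := exists_injection_mem hθ hM hκ hP hcard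
  intro y hy
  have hyS := hS.isTransitiveClass _ (hM.1 hP) hy
  obtain ⟨b, hbα, hyb⟩ := hcov y hy
  have hbM := hκ.subset_of_mem hαM hακ hbα
  have hdef : ∀ y ∈ HSet θ,
      Realize (HSet θ) (.kpairMem 0 1 2) ![y, b, f] ↔ ZFSet.pair y b ∈ f :=
    fun y hy => realize_kpairMem hS (b := 0) (c := 1) hy (hM.1 hbM)
  obtain ⟨y', hy'M, hy'⟩ := hM.exists_mem_of_realize_ex (v := ![b, f])
    (by simp [Fin.forall_fin_two, hbM, hfM]) (realize_ex.2 ⟨y, hyS, (hdef y hyS).2 hyb⟩)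
  rwa [hinj y hyS y' (hM.1 hy'M) b (hM.1 hbM) hyb ((hdef y' (hM.1 hy'M)).1 hy')]

lemma mem_of_subset_of_two_power_lt (hθ : ℵ₀ ≤ card θ) (hM : Prec M (HSet θ)) {κ : ZFSet}
    (hκ : KappaSpec M κ) {Z : ZFSet} (hZ : Z ∈ M) (hpow : 2 ^ card Z < card κ) {y : ZFSet}
    (hy : y ⊆ Z) : y ∈ M :=
  have hκθ := card_lt_of_mem_hset (hM.1 hκ.2.1)
  subset_of_card_lt hθ hM hκ (powerset_mem hθ hM hZ (hpow.trans hκθ))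
    ((card_powerset Z).trans_lt hpow) (ZFSet.mem_powerset.2 hy)

end Elementarity

lemma approx_of_forall_subset_mem {M : Set ZFSet} {δ : Cardinal.{1}}
    (h : ∀ Z ∈ M, card Z < δ → ∀ y ⊆ Z, y ∈ M) (d : ZFSet) : Approx M δ d :=
  fun Z hZ hZδ => h Z hZ hZδ _ fun _ hz => (ZFSet.mem_inter.1 hz).2

theorem powerlt_ge_of_not_guessing_general (θ : ZFSet) (hθ : IsRegCard θ)
    (M : Set ZFSet) (hM : Prec M (HSet θ)) (κ : ZFSet) (hκ : KappaSpec M κ)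
    (δ : Cardinal.{1}) (hG : GuessingModel M δ)
    (hnG : ¬ GuessingModel M ℵ₀) :
    card κ ≤ (2 : Cardinal.{1}) ^< δ := by
  by_contra! hlt
  have hsmall : ∀ Z ∈ M, card Z < δ → ∀ y ⊆ Z, y ∈ M := fun Z hZ hZδ _ =>
    mem_of_subset_of_two_power_lt (aleph0_le_card hθ.2.1) hM hκ hZ
      ((le_powerlt 2 hZδ).trans_lt hlt)
  exact hnG fun X hX d hd _ => hG X hX d hd (approx_of_forall_subset_mem hsmall d)

/-- If `M ≺ H_θ` is a `δ`-guessing model which is not an `ℵ₀`-guessing model,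
then `2^{<δ} ≥ κ_M`. -/
theorem powerlt_ge_of_not_guessing (θ : ZFSet) (hθ : IsRegCard θ)
    (M : Set ZFSet) (hM : Prec M (HSet θ)) (κ : ZFSet) (hκ : KappaSpec M κ)
    (δ : Cardinal.{1}) (hδκ : δ ≤ card κ) (hG : GuessingModel M δ)
    (hnG : ¬ GuessingModel M ℵ₀) :
    card κ ≤ (2 : Cardinal.{1}) ^< δ :=
  powerlt_ge_of_not_guessing_general θ hθ M hM κ hκ δ hG hnG

end GuessingModels
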